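/- Let c : (2πℤ)^d → ℝ be nonnegative and bounded with p ↦ c(p)² summable. For p ∈ (2πℤ)^d∖{0}, set e_p = √(|p|⁴ + 2|p|²c(p)), A_p = |p|² + c(p), B_p = c(p), α_p = (A_p − √(A_p² − B_p²))/B_p if c(p) > 0 and α_p = 0 otherwise, and β_p = (1/2)·artanh(α_p). Then the family p ↦ e_p·(cosh(2β_p) − 1)²/(16·β_p²), indexed by p ∈ (2πℤ)^d∖{0}, is summable (with the convention that the summand is 0 when β_p = 0). -/

import Mathlib

/-
With `P = |p|² ≥ 4π²` and `C = c(p) ≤ M`, the coefficient `α = (A - e)/C` (where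
`e = √(A² - C²) ≤ A = P + C`) satisfies `0 < α ≤ C/A`, so it stays away from `1`.
Since `cosh (artanh α) - 1 ≤ α²/(1 - α²)` and `artanh α ≥ α/2`, the summand is at most
`e α²/(1 - α²)² ≤ C² (P + C)/P² ≤ c(p)² (4π² + M)/(4π²)²`, and summability follows by
comparison with `c²`.
-/

open Real

noncomputable section

/-- `|p|²` for the lattice point `p = 2πk ∈ (2πℤ)^d`. -/
def pSq (d : ℕ) (k : Fin d → ℤ) : ℝ := ∑ j, (2 * π * (k j : ℝ)) ^ 2

/-- The inverse hyperbolic tangent, `artanh x = (1/2)·log((1+x)/(1-x))`. -/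
def artanh (x : ℝ) : ℝ := (1 / 2) * Real.log ((1 + x) / (1 - x))

/-- The Bogoliubov coefficient `α_p = (A_p - √(A_p² - B_p²))/B_p` with
`A_p = |p|² + c(p)`, `B_p = c(p)`, and the convention `α_p = 0` if `c(p) = 0`. -/
def alphaCoef (d : ℕ) (c : (Fin d → ℤ) → ℝ) (k : Fin d → ℤ) : ℝ :=
  if 0 < c k then
    (pSq d k + c k - Real.sqrt ((pSq d k + c k) ^ 2 - (c k) ^ 2)) / c k
  else 0

/-- `β_p = (1/2)·artanh(α_p)`. -/
def betaCoef (d : ℕ) (c : (Fin d → ℤ) → ℝ) (k : Fin d → ℤ) : ℝ :=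
  (1 / 2) * _root_.artanh (alphaCoef d c k)

/-- The elementary excitation energy `e_p = √(|p|⁴ + 2|p|²c(p))`. -/
def excitation (d : ℕ) (c : (Fin d → ℤ) → ℝ) (k : Fin d → ℤ) : ℝ :=
  Real.sqrt ((pSq d k) ^ 2 + 2 * pSq d k * c k)

lemma artanh_eq_real_artanh {x : ℝ} (hx : x ∈ Set.Icc (-1) 1) :
    _root_.artanh x = Real.artanh x :=
  (Real.artanh_eq_half_log hx).symm

lemma half_le_artanh {x : ℝ} (hx : x ∈ Set.Ico 0 1) : x / 2 ≤ Real.artanh x := by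
  obtain ⟨hx0, hx1⟩ := hx
  have hu : 0 < (1 + x) / (1 - x) := div_pos (by linarith) (by linarith)
  have hlog := Real.one_sub_inv_le_log_of_pos hu
  rw [inv_div] at hlog
  rw [Real.artanh_eq_half_log ⟨by linarith, hx1.le⟩]
  have hlower : x / 2 ≤ x / (1 + x) := div_le_div_of_nonneg_left hx0 (by linarith) (by linarith)
  have hsimp : 1 - (1 - x) / (1 + x) = 2 * (x / (1 + x)) := by field_simp; ring
  linarith

lemma cosh_artanh_sub_one_le {x : ℝ} (hx : x ∈ Set.Ioo (-1) 1) :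
    Real.cosh (Real.artanh x) - 1 ≤ x ^ 2 / (1 - x ^ 2) := by
  have hpos : 0 < 1 - x ^ 2 := by nlinarith [hx.1, hx.2]
  have hsqrt : 1 - x ^ 2 ≤ √(1 - x ^ 2) :=
    Real.le_sqrt_of_sq_le (by nlinarith [sq_nonneg x])
  calc Real.cosh (Real.artanh x) - 1 = 1 / √(1 - x ^ 2) - 1 := by rw [Real.cosh_artanh hx]
    _ ≤ 1 / (1 - x ^ 2) - 1 := by gcongr
    _ = x ^ 2 / (1 - x ^ 2) := by field_simp; ring

lemma sq_cosh_artanh_sub_one_div_le {x : ℝ} (hx : x ∈ Set.Ioo 0 1) :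
    (Real.cosh (Real.artanh x) - 1) ^ 2 / (4 * Real.artanh x ^ 2) ≤ x ^ 2 / (1 - x ^ 2) ^ 2 := by
  obtain ⟨hx0, hx1⟩ := hx
  have hpos : 0 < 1 - x ^ 2 := by nlinarith
  have hcosh := cosh_artanh_sub_one_le ⟨by linarith, hx1⟩
  have hart := half_le_artanh ⟨hx0.le, hx1⟩
  calc (Real.cosh (Real.artanh x) - 1) ^ 2 / (4 * Real.artanh x ^ 2)
      ≤ (x ^ 2 / (1 - x ^ 2)) ^ 2 / (4 * (x / 2) ^ 2) := by
        gcongr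
        linarith [Real.one_le_cosh (Real.artanh x)]
    _ = x ^ 2 / (1 - x ^ 2) ^ 2 := by field_simp; ring

section Bogoliubov

variable {P C : ℝ}

lemma sqrt_add_sq_sub_sq_lt (hP : 0 ≤ P) (hC : 0 < C) : √((P + C) ^ 2 - C ^ 2) < P + C :=
  (Real.sqrt_lt' (by linarith)).2 (by nlinarith)

lemma bogoliubov_alpha_pos (hP : 0 ≤ P) (hC : 0 < C) :
    0 < (P + C - √((P + C) ^ 2 - C ^ 2)) / C :=
  div_pos (sub_pos.2 (sqrt_add_sq_sub_sq_lt hP hC)) hC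

lemma bogoliubov_alpha_le (hP : 0 ≤ P) (hC : 0 < C) :
    (P + C - √((P + C) ^ 2 - C ^ 2)) / C ≤ C / (P + C) := by
  have hE := sqrt_add_sq_sub_sq_lt hP hC
  have hE2 := Real.sq_sqrt (show 0 ≤ (P + C) ^ 2 - C ^ 2 by nlinarith)
  rw [div_le_div_iff₀ hC (by linarith)]
  nlinarith [Real.sqrt_nonneg ((P + C) ^ 2 - C ^ 2)]

lemma mul_sq_div_one_sub_sq_sq_le {a E : ℝ} (hP : 0 < P) (hC : 0 ≤ C) (ha0 : 0 ≤ a)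
    (ha : a ≤ C / (P + C)) (hE : E ≤ P + C) :
    E * a ^ 2 / (1 - a ^ 2) ^ 2 ≤ C ^ 2 * (P + C) / P ^ 2 := by
  have hA : 0 < P + C := by linarith
  have h1a : P / (P + C) ≤ 1 - a := by
    have : C / (P + C) + P / (P + C) = 1 := by field_simp; ring
    linarith
  have ha1 : a ≤ 1 := by linarith [div_pos hP hA]
  have h1a2 : P / (P + C) ≤ 1 - a ^ 2 := h1a.trans (by nlinarith)
  calc E * a ^ 2 / (1 - a ^ 2) ^ 2 ≤ (P + C) * (C / (P + C)) ^ 2 / (P / (P + C)) ^ 2 := by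
        gcongr
    _ = C ^ 2 * (P + C) / P ^ 2 := by field_simp

end Bogoliubov

lemma pSq_ge_four_pi_sq {d : ℕ} {k : Fin d → ℤ} (hk : k ≠ 0) : 4 * π ^ 2 ≤ pSq d k := by
  obtain ⟨j, hj⟩ : ∃ j, k j ≠ 0 := by
    by_contra! h
    exact hk (funext h)
  have hkj : (1 : ℝ) ≤ (k j : ℝ) ^ 2 := by
    exact_mod_cast (one_le_sq_iff_one_le_abs _).2 (Int.one_le_abs hj)
  calc 4 * π ^ 2 ≤ (2 * π * (k j : ℝ)) ^ 2 := by nlinarith [Real.pi_pos]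
    _ ≤ pSq d k := Finset.single_le_sum (f := fun i => (2 * π * (k i : ℝ)) ^ 2)
        (fun i _ => sq_nonneg _) (Finset.mem_univ j)

def bogoliubovTerm (d : ℕ) (c : (Fin d → ℤ) → ℝ) (k : Fin d → ℤ) : ℝ :=
  if betaCoef d c k = 0 then 0
  else excitation d c k * (Real.cosh (2 * betaCoef d c k) - 1) ^ 2 / (16 * betaCoef d c k ^ 2)

section Term

variable {d : ℕ} {c : (Fin d → ℤ) → ℝ} {k : Fin d → ℤ}

lemma bogoliubovTerm_nonneg : 0 ≤ bogoliubovTerm d c k := by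
  unfold bogoliubovTerm excitation
  split_ifs <;> positivity

lemma excitation_eq_sqrt : excitation d c k = √((pSq d k + c k) ^ 2 - c k ^ 2) := by
  rw [excitation]
  ring_nf

lemma bogoliubovTerm_le (hc : 0 ≤ c k) (hk : k ≠ 0) :
    bogoliubovTerm d c k ≤ c k ^ 2 * (pSq d k + c k) / pSq d k ^ 2 := by
  have hP : 0 < pSq d k := lt_of_lt_of_le (by positivity) (pSq_ge_four_pi_sq hk)
  rcases hc.eq_or_lt with hc0 | hc0
  · have hβ0 : betaCoef d c k = 0 := by
      simp [betaCoef, alphaCoef, ← hc0, _root_.artanh]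
    rw [bogoliubovTerm, if_pos hβ0]
    positivity
  have hα_def : alphaCoef d c k = (pSq d k + c k - √((pSq d k + c k) ^ 2 - c k ^ 2)) / c k :=
    if_pos hc0
  have hα0 : 0 < alphaCoef d c k := hα_def ▸ bogoliubov_alpha_pos hP.le hc0
  have hα : alphaCoef d c k ≤ c k / (pSq d k + c k) := hα_def ▸ bogoliubov_alpha_le hP.le hc0
  have hα1 : alphaCoef d c k < 1 := hα.trans_lt ((div_lt_one (by linarith)).2 (by linarith))
  have hβ : 2 * betaCoef d c k = Real.artanh (alphaCoef d c k) := by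
    rw [betaCoef, artanh_eq_real_artanh ⟨by linarith, hα1.le⟩]
    ring
  have hβ0 : betaCoef d c k ≠ 0 := fun h =>
    (Real.artanh_pos ⟨hα0, hα1⟩).ne' (by rw [← hβ, h, mul_zero])
  have hE : excitation d c k ≤ pSq d k + c k :=
    excitation_eq_sqrt ▸ (sqrt_add_sq_sub_sq_lt hP.le hc0).le
  rw [bogoliubovTerm, if_neg hβ0,
    show 16 * betaCoef d c k ^ 2 = 4 * (2 * betaCoef d c k) ^ 2 by ring, hβ, mul_div_assoc]
  calc excitation d c k * ((Real.cosh (Real.artanh (alphaCoef d c k)) - 1) ^ 2 /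
        (4 * Real.artanh (alphaCoef d c k) ^ 2))
      ≤ excitation d c k * (alphaCoef d c k ^ 2 / (1 - alphaCoef d c k ^ 2) ^ 2) :=
        mul_le_mul_of_nonneg_left (sq_cosh_artanh_sub_one_div_le ⟨hα0, hα1⟩) (Real.sqrt_nonneg _)
    _ = excitation d c k * alphaCoef d c k ^ 2 / (1 - alphaCoef d c k ^ 2) ^ 2 := by ring
    _ ≤ c k ^ 2 * (pSq d k + c k) / pSq d k ^ 2 :=
        mul_sq_div_one_sub_sq_sq_le hP hc hα0.le hα hE

end Term

theorem statement12_general (d : ℕ) (c : (Fin d → ℤ) → ℝ)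
    (hc : ∀ k, 0 ≤ c k) (hbdd : ∃ M : ℝ, ∀ k, c k ≤ M)
    (hsum : Summable fun k : Fin d → ℤ => (c k) ^ 2) :
    Summable (fun k : {k : Fin d → ℤ // k ≠ 0} =>
      if betaCoef d c k.1 = 0 then 0
      else excitation d c k.1 * (Real.cosh (2 * betaCoef d c k.1) - 1) ^ 2 /
        (16 * (betaCoef d c k.1) ^ 2)) := by
  obtain ⟨M, hM⟩ := hbdd
  set Q : ℝ := 4 * π ^ 2
  refine Summable.of_nonneg_of_le (fun k => bogoliubovTerm_nonneg)
    (fun k => ?_) ((hsum.subtype {k | k ≠ 0}).mul_left ((Q + M) / Q ^ 2))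
  have hP : Q ≤ pSq d k.1 := pSq_ge_four_pi_sq k.2
  calc bogoliubovTerm d c k.1 ≤ c k.1 ^ 2 * (pSq d k.1 + c k.1) / pSq d k.1 ^ 2 :=
        bogoliubovTerm_le (hc k.1) k.2
    _ = c k.1 ^ 2 * (1 / pSq d k.1 + c k.1 / pSq d k.1 ^ 2) := by
        field_simp
    _ ≤ c k.1 ^ 2 * (1 / Q + M / Q ^ 2) := by
        gcongr
        · exact (hc k.1).trans (hM k.1)
        · exact hM k.1
    _ = (Q + M) / Q ^ 2 * c k.1 ^ 2 := by
        field_simp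

theorem statement12 (d : ℕ) (hd : 1 ≤ d) (c : (Fin d → ℤ) → ℝ)
    (hc : ∀ k, 0 ≤ c k) (hbdd : ∃ M : ℝ, ∀ k, c k ≤ M)
    (hsum : Summable fun k : Fin d → ℤ => (c k) ^ 2) :
    Summable (fun k : {k : Fin d → ℤ // k ≠ 0} =>
      if betaCoef d c k.1 = 0 then 0
      else excitation d c k.1 * (Real.cosh (2 * betaCoef d c k.1) - 1) ^ 2 /
        (16 * (betaCoef d c k.1) ^ 2)) :=
  statement12_general d c hc hbdd hsum
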